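/- Let 0 ≤ r ≤ m and 𝐩 = (p_1,…,p_m) with 1 ≤ p_i < ∞ for 1 ≤ i ≤ r and p_{r+1} = … = p_m = ∞. Let f : Λ^{𝐤} → ℝ be separately convex and satisfy |f(ξ)| ≤ α(1 + Σ_{i=1}^r |ξ_i|^{p_i} + Σ_{i=r+1}^m η_i(|ξ_i|)) for all ξ, where α > 0 and the η_i are nonnegative, continuous, increasing functions. Let C > 0, let Q ⊂ ∏_{i=r+1}^m Λ^{k_i}(ℝⁿ) be the cube consisting of points all of whose components lie in [−C,C], and set K := Λ^{k_1} × … × Λ^{k_r} × Q. Then there exist constants β_i = β_i(K) > 0, i = 1,…,m, such that for all ξ, ζ ∈ K: |f(ξ) − f(ζ)| ≤ Σ_{i=1}^r β_i (1 + Σ_{j=1}^r (|ξ_j|^{p_j/p_i'} + |ζ_j|^{p_j/p_i'})) |ξ_i − ζ_i| + Σ_{i=r+1}^m β_i (1 + Σ_{j=1}^r (|ξ_j|^{p_j} + |ζ_j|^{p_j})) |ξ_i − ζ_i|, where p_i' is the Hölder conjugate of p_i. -/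

import Mathlib

open MeasureTheory Filter Topology
open scoped ENNReal

noncomputable section

/-- Euclidean `n`-space `ℝⁿ`. -/
abbrev Rn (n : ℕ) := EuclideanSpace ℝ (Fin n)

/-- Index type for the coordinates of `Λᵏ(ℝⁿ)` : `k`-element subsets of `{0,…,n-1}`. -/
abbrev IdxSet (n k : ℕ) := {s : Finset (Fin n) // s.card = k}

/-- The space `Λᵏ(ℝⁿ)` of alternating `k`-linear maps on `ℝⁿ`, in coordinates. -/
abbrev Lam (n k : ℕ) := IdxSet n k → ℝ

/-- The euclidean scalar product `⟨·;·⟩` on `Λᵏ(ℝⁿ)`. -/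
def dotL {n k : ℕ} (x y : Lam n k) : ℝ := ∑ S, x S * y S

/-- The euclidean norm `|·|` on `Λᵏ(ℝⁿ)`. -/
def nL {n k : ℕ} (x : Lam n k) : ℝ := Real.sqrt (∑ S, x S ^ 2)

/-- The sign of the shuffle putting `A ∪ B` in increasing order, `A` before `B`. -/
def interSign {n : ℕ} (A B : Finset (Fin n)) : ℝ :=
  (-1 : ℝ) ^ ((A ×ˢ B).filter fun p => p.2 < p.1).card

/-- The wedge (exterior) product `Λᵏ × Λˡ → Λ^{k+l}`. -/
def wedge {n k l : ℕ} (ξ : Lam n k) (η : Lam n l) : Lam n (k + l) := fun S =>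
  ∑ A ∈ S.1.powerset.attach,
    if hA : A.1.card = k then
      interSign A.1 (S.1 \ A.1) * ξ ⟨A.1, hA⟩ *
        η ⟨S.1 \ A.1, by
          rw [Finset.card_sdiff_of_subset (Finset.mem_powerset.mp A.2), S.2, hA]; omega⟩
    else 0

/-- Transport along an equality of degrees. -/
def lamCast {n k l : ℕ} (h : k = l) (ξ : Lam n k) : Lam n l := fun S => ξ ⟨S.1, by rw [S.2, h]⟩

/-- The wedge power `ξ^a = ξ ∧ ⋯ ∧ ξ` (`a` times). -/
def wpow {n k : ℕ} (ξ : Lam n k) : (a : ℕ) → Lam n (k * a)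
  | 0 => fun _ => 1
  | a + 1 => wedge (wpow ξ a) ξ

/-- The wedge product of a finite family of forms. -/
def wprod {n : ℕ} : {m : ℕ} → (d : Fin m → ℕ) → ((i : Fin m) → Lam n (d i)) → Lam n (∑ i, d i)
  | 0, _, _ => lamCast (by simp) ((fun _ => (1 : ℝ)) : Lam n 0)
  | _ + 1, d, ξ =>
      lamCast (Fin.sum_univ_succ d).symm
        (wedge (ξ 0) (wprod (fun i => d i.succ) fun i => ξ i.succ))

/-- `ξ^α = ξ₁^{α₁} ∧ ⋯ ∧ ξ_m^{α_m}`. -/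
def wpowProd {n m : ℕ} (k : Fin m → ℕ) (ξ : (i : Fin m) → Lam n (k i)) (α : Fin m → ℕ) :
    Lam n (∑ i, k i * α i) :=
  wprod (fun i => k i * α i) fun i => wpow (ξ i) (α i)

/-- sign of inserting `i` into `S`. -/
def epsSign {n : ℕ} (i : Fin n) (S : Finset (Fin n)) : ℝ :=
  (-1 : ℝ) ^ (S.filter fun j => j < i).card

/-- `i`-th partial derivative of a scalar function on `ℝⁿ`. -/
def pd {n : ℕ} (i : Fin n) (ψ : Rn n → ℝ) (x : Rn n) : ℝ :=
  fderiv ℝ ψ x (EuclideanSpace.single i 1)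

/-- Test functions for distributions on `Ω`: smooth, compactly supported in `Ω`. -/
def IsTest {n : ℕ} (Ω : Set (Rn n)) (ψ : Rn n → ℝ) : Prop :=
  ContDiff ℝ (⊤ : ℕ∞) ψ ∧ HasCompactSupport ψ ∧ tsupport ψ ⊆ Ω

/-- `v` is the distributional exterior derivative of the `(j-1)`-form field `ω` on `Ω`. -/
def IsWED {n : ℕ} (Ω : Set (Rn n)) {j : ℕ} (ω : Rn n → Lam n (j - 1)) (v : Rn n → Lam n j) :
    Prop :=
  ∀ (S : IdxSet n j) (ψ : Rn n → ℝ), IsTest Ω ψ →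
    ∫ x in Ω, v x S * ψ x =
      - ∑ i ∈ S.1.attach,
          epsSign i.1 S.1 *
            ∫ x in Ω,
              ω x ⟨S.1.erase i.1, by rw [Finset.card_erase_of_mem i.2, S.2]⟩ * pd i.1 ψ x

/-- `v = dω` weakly on `Ω` together with vanishing tangential trace `ν ∧ ω = 0` on `∂Ω`:
integration by parts holds with no boundary term against all smooth test functions (not
necessarily compactly supported). -/
def IsWEDT {n : ℕ} (Ω : Set (Rn n)) {j : ℕ} (ω : Rn n → Lam n (j - 1)) (v : Rn n → Lam n j) :
    Prop :=
  ∀ (S : IdxSet n j) (ψ : Rn n → ℝ), ContDiff ℝ (⊤ : ℕ∞) ψ →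
    ∫ x in Ω, v x S * ψ x =
      - ∑ i ∈ S.1.attach,
          epsSign i.1 S.1 *
            ∫ x in Ω,
              ω x ⟨S.1.erase i.1, by rw [Finset.card_erase_of_mem i.2, S.2]⟩ * pd i.1 ψ x

/-- The exterior derivative of a `(j-1)`-form field expressed through the (weak) partial
derivatives `D` of its components. -/
def extDerivOf {n : ℕ} {j : ℕ} (D : Fin n → Rn n → Lam n (j - 1)) : Rn n → Lam n j :=
  fun x S =>
    ∑ i ∈ S.1.attach,
      epsSign i.1 S.1 * D i.1 x ⟨S.1.erase i.1, by rw [Finset.card_erase_of_mem i.2, S.2]⟩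

/-- The (classical) exterior derivative of a smooth `(j-1)`-form field. -/
def smoothExtD {n : ℕ} {j : ℕ} (φ : Rn n → Lam n (j - 1)) : Rn n → Lam n j :=
  fun x S =>
    ∑ i ∈ S.1.attach,
      epsSign i.1 S.1 *
        fderiv ℝ (fun y => φ y ⟨S.1.erase i.1, by rw [Finset.card_erase_of_mem i.2, S.2]⟩) x
          (EuclideanSpace.single i.1 1)

/-- `dω = 0` in the sense of distributions on `Ω`. -/
def WeakClosed {n : ℕ} {j : ℕ} (Ω : Set (Rn n)) (ω : Rn n → Lam n j) : Prop :=
  IsWED (j := j + 1) Ω ω fun _ => (0 : Lam n (j + 1))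

/-- `δω = 0` in the sense of distributions on `Ω`:
`∫ ⟨ω, dφ⟩ = 0` for every smooth compactly supported `(j-1)`-form field `φ`. -/
def WeakCoclosed {n : ℕ} {j : ℕ} (Ω : Set (Rn n)) (ω : Rn n → Lam n j) : Prop :=
  ∀ φ : Rn n → Lam n (j - 1), ContDiff ℝ (⊤ : ℕ∞) φ → HasCompactSupport φ → tsupport φ ⊆ Ω →
    ∫ x in Ω, dotL (ω x) (smoothExtD (j := j) φ x) = 0

/-- The conjugate Hölder exponent. -/
def conjExp (p : ℝ≥0∞) : ℝ≥0∞ :=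
  if p = ∞ then 1 else if p = 1 then ∞ else ENNReal.ofReal (p.toReal / (p.toReal - 1))

/-- Weak convergence (weak-* if `p = ∞`) of a sequence in `L^p(Ω; Λᵏ)`:
the sequence and the limit belong to `L^p` and the integrals against every element of the
conjugate Lebesgue space converge. -/
def WeakLp {n j : ℕ} (Ω : Set (Rn n)) (p : ℝ≥0∞) (F : ℕ → Rn n → Lam n j)
    (f : Rn n → Lam n j) : Prop :=
  (∀ ν, MemLp (F ν) p (volume.restrict Ω)) ∧ MemLp f p (volume.restrict Ω) ∧
    ∀ g : Rn n → Lam n j, MemLp g (conjExp p) (volume.restrict Ω) →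
      Tendsto (fun ν => ∫ x in Ω, dotL (F ν x) (g x)) atTop
        (𝓝 (∫ x in Ω, dotL (f x) (g x)))

/-- `v` is the `i`-th weak partial derivative of `u` on `Ω`. -/
def IsWeakPartial {n : ℕ} {E : Type*} [NormedAddCommGroup E] [NormedSpace ℝ E]
    (Ω : Set (Rn n)) (i : Fin n) (u v : Rn n → E) : Prop :=
  ∀ ψ : Rn n → ℝ, IsTest Ω ψ → ∫ x in Ω, ψ x • v x = - ∫ x in Ω, pd i ψ x • u x

/-- Membership in the Sobolev space `W^{1,p}(Ω; E)`, with weak partial derivatives `D`. -/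
def MemW1p {n : ℕ} {E : Type*} [NormedAddCommGroup E] [NormedSpace ℝ E] (Ω : Set (Rn n))
    (p : ℝ≥0∞) (u : Rn n → E) (D : Fin n → Rn n → E) : Prop :=
  MemLp u p (volume.restrict Ω) ∧
    ∀ i, IsWeakPartial Ω i u (D i) ∧ MemLp (D i) p (volume.restrict Ω)

/-- Membership in `W₀^{1,p}(Ω; E)` (zero boundary values): the extension of `u` by zero
belongs to `W^{1,p}(ℝⁿ; E)`. -/
def MemW1p0 {n : ℕ} {E : Type*} [NormedAddCommGroup E] [NormedSpace ℝ E] (Ω : Set (Rn n))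
    (p : ℝ≥0∞) (u : Rn n → E) (D : Fin n → Rn n → E) : Prop :=
  MemW1p Ω p u D ∧ (∀ x ∉ Ω, u x = 0) ∧
    ∀ i, (∀ x ∉ Ω, D i x = 0) ∧ IsWeakPartial Set.univ i u (D i)

/-- A bounded open set with smooth boundary, via local smooth defining functions. -/
def IsSmoothDomain {n : ℕ} (Ω : Set (Rn n)) : Prop :=
  ∀ x ∈ frontier Ω, ∃ (U : Set (Rn n)) (ρ : Rn n → ℝ), IsOpen U ∧ x ∈ U ∧
    ContDiff ℝ (⊤ : ℕ∞) ρ ∧ (∀ y ∈ U, (y ∈ Ω ↔ ρ y < 0)) ∧ ∀ y ∈ U, fderiv ℝ ρ y ≠ 0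

/-- Vectorial ext. one convexity. -/
def VOneConvex {n m : ℕ} (k : Fin m → ℕ) (f : ((i : Fin m) → Lam n (k i + 1)) → ℝ) : Prop :=
  ∀ (ξ : (i : Fin m) → Lam n (k i + 1)) (a : Lam n 1) (b : (i : Fin m) → Lam n (k i)),
    ConvexOn ℝ Set.univ fun t : ℝ =>
      f fun i => ξ i + t • lamCast (Nat.add_comm 1 (k i)) (wedge a (b i))

/-- Vectorial ext. one affinity. -/
def VOneAffine {n m : ℕ} (k : Fin m → ℕ) (f : ((i : Fin m) → Lam n (k i + 1)) → ℝ) : Prop :=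
  ∀ (ξ : (i : Fin m) → Lam n (k i + 1)) (a : Lam n 1) (b : (i : Fin m) → Lam n (k i)),
    ∃ c d : ℝ, ∀ t : ℝ,
      f (fun i => ξ i + t • lamCast (Nat.add_comm 1 (k i)) (wedge a (b i))) = c + d * t

/-- Vectorial ext. quasiconvexity. -/
def VQuasiconvex {n m : ℕ} (k : Fin m → ℕ) (f : ((i : Fin m) → Lam n (k i + 1)) → ℝ) : Prop :=
  ∀ (Ω : Set (Rn n)), IsOpen Ω → Bornology.IsBounded Ω → Ω.Nonempty →
    ∀ (ξ : (i : Fin m) → Lam n (k i + 1)) (ω : (i : Fin m) → Rn n → Lam n (k i))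
      (v : (i : Fin m) → Rn n → Lam n (k i + 1)),
      (∀ i, ∃ C, LipschitzWith C (ω i)) → (∀ i, ∀ x ∉ Ω, ω i x = 0) →
      (∀ i, IsWED (j := k i + 1) Ω (ω i) (v i)) →
      (∀ i, MemLp (v i) ∞ (volume.restrict Ω)) →
      f ξ * (volume Ω).toReal ≤ ∫ x in Ω, f fun i => ξ i + v i x

/-- Vectorial ext. quasiaffinity. -/
def VQuasiaffine {n m : ℕ} (k : Fin m → ℕ) (f : ((i : Fin m) → Lam n (k i + 1)) → ℝ) : Prop :=
  ∀ (Ω : Set (Rn n)), IsOpen Ω → Bornology.IsBounded Ω → Ω.Nonempty →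
    ∀ (ξ : (i : Fin m) → Lam n (k i + 1)) (ω : (i : Fin m) → Rn n → Lam n (k i))
      (v : (i : Fin m) → Rn n → Lam n (k i + 1)),
      (∀ i, ∃ C, LipschitzWith C (ω i)) → (∀ i, ∀ x ∉ Ω, ω i x = 0) →
      (∀ i, IsWED (j := k i + 1) Ω (ω i) (v i)) →
      (∀ i, MemLp (v i) ∞ (volume.restrict Ω)) →
      (∫ x in Ω, f fun i => ξ i + v i x) = f ξ * (volume Ω).toReal

/-- Multiindices `α` with `1 ≤ |kα| ≤ n` (degrees of the nontrivial wedge powers). -/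
abbrev MIdx (n m : ℕ) (k : Fin m → ℕ) :=
  {α : Fin m → Fin (n + 1) //
    1 ≤ ∑ i, (k i + 1) * (α i : ℕ) ∧ ∑ i, (k i + 1) * (α i : ℕ) ≤ n}

/-- Multiindices `α` with `0 ≤ |kα| ≤ n`. -/
abbrev MIdx0 (n m : ℕ) (k : Fin m → ℕ) :=
  {α : Fin m → Fin (n + 1) // ∑ i, (k i + 1) * (α i : ℕ) ≤ n}

/-- The target space of the map `T`. -/
abbrev TSpace (n m : ℕ) (k : Fin m → ℕ) :=
  (α : MIdx n m k) → Lam n (∑ i, (k i + 1) * (α.1 i : ℕ))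

/-- `T(ξ)`, the vector of all nontrivial wedge powers of `ξ`. -/
def Tvec {n m : ℕ} (k : Fin m → ℕ) (ξ : (i : Fin m) → Lam n (k i + 1)) : TSpace n m k :=
  fun α => wpowProd (fun i => k i + 1) ξ fun i => (α.1 i : ℕ)

/-- Vectorial ext. polyconvexity. -/
def VPolyconvex {n m : ℕ} (k : Fin m → ℕ) (f : ((i : Fin m) → Lam n (k i + 1)) → ℝ) : Prop :=
  ∃ F : TSpace n m k → ℝ, ConvexOn ℝ Set.univ F ∧ ∀ ξ, f ξ = F (Tvec k ξ)

/-- Vectorial ext. polyaffinity. -/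
def VPolyaffine {n m : ℕ} (k : Fin m → ℕ) (f : ((i : Fin m) → Lam n (k i + 1)) → ℝ) : Prop :=
  ∃ (c : ℝ) (L : TSpace n m k →ₗ[ℝ] ℝ), ∀ ξ, f ξ = c + L (Tvec k ξ)

/-- Separate convexity: convexity in each scalar component. -/
def SepConvex {n m : ℕ} {d : Fin m → ℕ} (f : ((i : Fin m) → Lam n (d i)) → ℝ) : Prop :=
  ∀ (ξ : (i : Fin m) → Lam n (d i)) (i : Fin m) (S : IdxSet n (d i)),
    ConvexOn ℝ Set.univ fun t : ℝ => f (Function.update ξ i (Function.update (ξ i) S t))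

/-- Equiintegrability of a family of functions over `Ω`. -/
def EquiInt {n : ℕ} (Ω : Set (Rn n)) (F : ℕ → Rn n → ℝ) : Prop :=
  ∀ ε > (0 : ℝ), ∃ δ > (0 : ℝ), ∀ A : Set (Rn n), MeasurableSet A →
    volume A ≤ ENNReal.ofReal δ → ∀ s, ∫ x in A ∩ Ω, |F s x| ≤ ε

/-- Admissible lower growth function for exponent `p` (growth condition `(C_p)`). -/
def LowerCtrl {n j : ℕ} (p : ℝ≥0∞) (G : Lam n j → ℝ) : Prop :=
  (p = 1 ∧ ∃ a : ℝ, 0 ≤ a ∧ ∀ ξ, G ξ = a * nL ξ) ∨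
  (1 < p ∧ p ≠ ∞ ∧ ∃ a q : ℝ, 0 ≤ a ∧ 1 ≤ q ∧ q < p.toReal ∧ ∀ ξ, G ξ = a * nL ξ ^ q) ∨
  (p = ∞ ∧ ∃ η : ℝ → ℝ, (∀ t, 0 ≤ η t) ∧ Continuous η ∧ Monotone η ∧ ∀ ξ, G ξ = η (nL ξ))

/-- Admissible upper growth function for exponent `p` (growth condition `(C_p)`). -/
def UpperCtrl {n j : ℕ} (p : ℝ≥0∞) (G : Lam n j → ℝ) : Prop :=
  (p = 1 ∧ ∃ a : ℝ, 0 ≤ a ∧ ∀ ξ, G ξ = a * nL ξ) ∨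
  (1 < p ∧ p ≠ ∞ ∧ ∃ a : ℝ, 0 ≤ a ∧ ∀ ξ, G ξ = a * nL ξ ^ p.toReal) ∨
  (p = ∞ ∧ ∃ η : ℝ → ℝ, (∀ t, 0 ≤ η t) ∧ Continuous η ∧ Monotone η ∧ ∀ ξ, G ξ = η (nL ξ))

/-- The growth condition `(C_𝐩)`. -/
def GrowthCp {n m : ℕ} (k : Fin m → ℕ) (p : Fin m → ℝ≥0∞)
    (f : ((i : Fin m) → Lam n (k i + 1)) → ℝ) : Prop :=
  ∃ (a : ℝ) (Gl Gu : (i : Fin m) → Lam n (k i + 1) → ℝ), 0 < a ∧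
    (∀ i, LowerCtrl (p i) (Gl i)) ∧ (∀ i, UpperCtrl (p i) (Gu i)) ∧
    ∀ ξ, -(a * (1 + ∑ i, Gl i (ξ i))) ≤ f ξ ∧ f ξ ≤ a * (1 + ∑ i, Gu i (ξ i))

/-!
A convex function of one real variable with `|g| ≤ A` on `[-R - h, R + h]` is `4A/h`-Lipschitz
on `[-R, R]`. Changing `ξ` into `ζ` one scalar coordinate at a time, a separately convex `f`
therefore satisfies `|f ξ - f ζ| ≤ Σ_c 4A/h_c |ξ_c - ζ_c|` whenever `|f| ≤ A` on the box
`|u_c| ≤ max (|ξ_c|, |ζ_c|) + h_c`.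

Put `H = 1 + Σ_{j<r} (|ξ_j|^{p_j} + |ζ_j|^{p_j})` and take the half-width `H^{1/p_i}` in the
components `i < r` and `1` in the bounded ones. On that box the growth condition gives
`|f| ≤ a K H` with `K` independent of `ξ, ζ`, so component `i` contributes a multiple of
`H / H^{1/p_i} = H^{1/p_i'}` times `|ξ_i - ζ_i|`. By subadditivity of `t ↦ t^{1/p_i'}`, this
is at most `1 + Σ_{j<r} (|ξ_j|^{p_j/p_i'} + |ζ_j|^{p_j/p_i'})`.
-/

theorem ConvexOn.abs_sub_le_of_abs_le {g : ℝ → ℝ} (hg : ConvexOn ℝ Set.univ g) {R h A : ℝ}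
    (hh : 0 < h) (hA : ∀ u, |u| ≤ R + h → |g u| ≤ A) {s t : ℝ} (hs : |s| ≤ R) (ht : |t| ≤ R) :
    |g s - g t| ≤ 4 * A / h * |s - t| := by
  have hA0 : 0 ≤ A := (abs_nonneg _).trans (hA s (by linarith))
  have hL := (hg.subset (Set.subset_univ _) (convex_ball 0 (R + h))).lipschitzOnWith_of_abs_le
    (half_pos hh) fun u hu => hA u (by simpa using hu.le)
  have hmem : ∀ {x : ℝ}, |x| ≤ R → x ∈ Metric.ball (0 : ℝ) (R + h - h / 2) := fun hx => by
    rw [mem_ball_zero_iff, Real.norm_eq_abs]; linarith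
  have := hL.dist_le_mul s (hmem hs) t (hmem ht)
  rw [Real.dist_eq, Real.dist_eq, Real.coe_toNNReal _ (by positivity)] at this
  exact this.trans_eq (by ring)

open Function in
theorem abs_sub_le_of_convexOn_update {ι : Type*} [Fintype ι] [DecidableEq ι]
    {g : (ι → ℝ) → ℝ} (hg : ∀ z c, ConvexOn ℝ Set.univ fun t => g (update z c t))
    {x y h : ι → ℝ} (hh : ∀ c, 0 < h c) {A : ℝ}
    (hA : ∀ u, (∀ c, |u c| ≤ max |x c| |y c| + h c) → |g u| ≤ A) :
    |g x - g y| ≤ ∑ c, 4 * A / h c * |x c - y c| := by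
  suffices ∀ T : Finset ι, |g (T.piecewise x y) - g y| ≤ ∑ c ∈ T, 4 * A / h c * |x c - y c| by
    simpa using this Finset.univ
  intro T
  induction T using Finset.induction_on with
  | empty => simp
  | insert c T hc ih =>
    set z := T.piecewise x y
    have hz : ∀ c', |z c'| ≤ max |x c'| |y c'| := fun c' => by
      by_cases hc' : c' ∈ T <;> simp [z, hc']
    have hstep : |g (update z c (x c)) - g (update z c (y c))| ≤ 4 * A / h c * |x c - y c| :=
      (hg z c).abs_sub_le_of_abs_le (hh c) (fun u hu => hA _ fun c' => by
        rcases eq_or_ne c' c with rfl | hne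
        · simpa using hu
        · simpa [hne] using (hz c').trans (le_add_of_nonneg_right (hh c').le))
        (le_max_left _ _) (le_max_right _ _)
    rw [Finset.piecewise_insert, Finset.sum_insert hc]
    have hzc : update z c (y c) = z := by
      rw [← T.piecewise_eq_of_notMem x y hc, update_eq_self]
    rw [hzc] at hstep
    calc |g (update z c (x c)) - g y|
        ≤ |g (update z c (x c)) - g z| + |g z - g y| := abs_sub_le _ _ _
      _ ≤ _ := add_le_add hstep ih

theorem one_add_sum_rpow_le {ι : Type*} (T : Finset ι) {t : ι → ℝ} (ht : ∀ j ∈ T, 0 ≤ t j)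
    {s : ℝ} (hs0 : 0 ≤ s) (hs1 : s ≤ 1) :
    (1 + ∑ j ∈ T, t j) ^ s ≤ 1 + ∑ j ∈ T, t j ^ s := by
  classical
  induction T using Finset.induction_on with
  | empty => simp
  | insert a T ha ih =>
    simp only [Finset.forall_mem_insert] at ht
    rw [Finset.sum_insert ha, Finset.sum_insert ha, add_left_comm, add_left_comm 1]
    calc (t a + (1 + ∑ j ∈ T, t j)) ^ s ≤ t a ^ s + (1 + ∑ j ∈ T, t j) ^ s :=
          Real.rpow_add_le_add_rpow ht.1 (by linarith [Finset.sum_nonneg ht.2]) hs0 hs1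
      _ ≤ t a ^ s + (1 + ∑ j ∈ T, t j ^ s) := by gcongr; exact ih ht.2

theorem one_add_sum_ite_rpow_le {ι : Type*} [Fintype ι] (P : ι → Prop) [DecidablePred P]
    {x y q : ι → ℝ} (hx : ∀ j, 0 ≤ x j) (hy : ∀ j, 0 ≤ y j) {s : ℝ} (hs0 : 0 ≤ s) (hs1 : s ≤ 1) :
    (1 + ∑ j, if P j then x j ^ q j + y j ^ q j else 0) ^ s ≤
      1 + ∑ j, if P j then x j ^ (q j * s) + y j ^ (q j * s) else 0 := by
  simp only [← Finset.sum_filter]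
  refine (one_add_sum_rpow_le _ (fun j _ => add_nonneg (Real.rpow_nonneg (hx j) _)
    (Real.rpow_nonneg (hy j) _)) hs0 hs1).trans ?_
  gcongr with j
  rw [Real.rpow_mul (hx j), Real.rpow_mul (hy j)]
  exact Real.rpow_add_le_add_rpow (Real.rpow_nonneg (hx j) _) (Real.rpow_nonneg (hy j) _) hs0 hs1

theorem div_rpow_inv_le_one_add_sum_ite {ι : Type*} [Fintype ι] (P : ι → Prop)
    [DecidablePred P] {x y q : ι → ℝ} (hx : ∀ j, 0 ≤ x j) (hy : ∀ j, 0 ≤ y j) {s : ℝ}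
    (hs : 1 ≤ s) :
    (1 + ∑ j, if P j then x j ^ q j + y j ^ q j else 0) /
        (1 + ∑ j, if P j then x j ^ q j + y j ^ q j else 0) ^ s⁻¹ ≤
      1 + ∑ j, if P j then x j ^ (q j * (s - 1) / s) + y j ^ (q j * (s - 1) / s) else 0 := by
  have hH : 0 < 1 + ∑ j, if P j then x j ^ q j + y j ^ q j else 0 := by
    refine add_pos_of_pos_of_nonneg one_pos (Finset.sum_nonneg fun j _ => ?_)
    split_ifs
    exacts [add_nonneg (Real.rpow_nonneg (hx j) _) (Real.rpow_nonneg (hy j) _), le_rfl]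
  have hdiv : ∀ H : ℝ, 0 < H → H / H ^ s⁻¹ = H ^ ((s - 1) / s) := fun H hH => by
    rw [sub_div, div_self (by linarith), one_div, Real.rpow_sub hH, Real.rpow_one]
  rw [hdiv _ hH]
  simpa only [mul_div_assoc] using one_add_sum_ite_rpow_le P (q := q) hx hy
    (div_nonneg (by linarith) (by linarith)) (div_le_one_of_le₀ (by linarith) (by linarith))

section nL

variable {n k : ℕ}

theorem nL_nonneg (x : Lam n k) : 0 ≤ nL x := Real.sqrt_nonneg _

theorem abs_le_nL (x : Lam n k) (S : IdxSet n k) : |x S| ≤ nL x := by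
  rw [← Real.sqrt_sq_eq_abs]
  exact Real.sqrt_le_sqrt (Finset.single_le_sum (fun T _ => sq_nonneg (x T)) (Finset.mem_univ S))

theorem nL_le_sum_abs (x : Lam n k) : nL x ≤ ∑ S, |x S| := by
  rw [nL, Real.sqrt_le_left (Finset.sum_nonneg fun S _ => abs_nonneg (x S))]
  simpa only [sq_abs] using
    Finset.sum_sq_le_sq_sum_of_nonneg (f := fun S => |x S|) fun S _ => abs_nonneg (x S)

theorem sum_abs_le_card_mul_nL (x : Lam n k) :
    ∑ S, |x S| ≤ Fintype.card (IdxSet n k) * nL x := by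
  simpa using Finset.sum_le_sum fun S (_ : S ∈ Finset.univ) => abs_le_nL x S

theorem nL_le_card_mul_of_abs_le {x : Lam n k} {c : ℝ} (hc : ∀ S, |x S| ≤ c) :
    nL x ≤ Fintype.card (IdxSet n k) * c :=
  (nL_le_sum_abs x).trans (by simpa using Finset.sum_le_sum fun S (_ : S ∈ Finset.univ) => hc S)

theorem nL_le_card_mul_of_abs_le_max_add {x y u : Lam n k} {C h : ℝ}
    (hx : ∀ S, |x S| ≤ C) (hy : ∀ S, |y S| ≤ C) (hu : ∀ S, |u S| ≤ max |x S| |y S| + h) :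
    nL u ≤ Fintype.card (IdxSet n k) * (C + h) :=
  nL_le_card_mul_of_abs_le fun S => (hu S).trans (by gcongr; exact max_le (hx S) (hy S))

theorem nL_rpow_le_of_abs_le_max_add {x y u : Lam n k} {q H : ℝ} (hq : 0 < q)
    (hxy : nL x ^ q + nL y ^ q ≤ H) (hu : ∀ S, |u S| ≤ max |x S| |y S| + H ^ q⁻¹) :
    nL u ^ q ≤ (2 * Fintype.card (IdxSet n k)) ^ q * H := by
  have hx := Real.rpow_nonneg (nL_nonneg x) q
  have hy := Real.rpow_nonneg (nL_nonneg y) q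
  have hH : 0 ≤ H := by linarith
  have hroot : ∀ z : Lam n k, nL z ^ q ≤ H → ∀ S, |z S| ≤ H ^ q⁻¹ := fun z hz S =>
    (abs_le_nL z S).trans ((Real.le_rpow_inv_iff_of_pos (nL_nonneg z) hH hq).2 hz)
  have hu' : nL u ≤ Fintype.card (IdxSet n k) * (H ^ q⁻¹ + H ^ q⁻¹) :=
    nL_le_card_mul_of_abs_le_max_add (hroot x (by linarith)) (hroot y (by linarith)) hu
  calc nL u ^ q ≤ (2 * Fintype.card (IdxSet n k) * H ^ q⁻¹) ^ q := by
        gcongr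
        · exact nL_nonneg u
        · linarith
    _ = _ := by rw [Real.mul_rpow (by positivity) (by positivity), Real.rpow_inv_rpow hH hq.ne']

end nL

theorem SepConvex.abs_sub_le {n m : ℕ} {d : Fin m → ℕ} {f : ((i : Fin m) → Lam n (d i)) → ℝ}
    (hf : SepConvex f) (ξ ζ : (i : Fin m) → Lam n (d i)) {h : Fin m → ℝ} (hh : ∀ i, 0 < h i)
    {A : ℝ} (hA : ∀ u : (i : Fin m) → Lam n (d i),
      (∀ i S, |u i S| ≤ max |ξ i S| |ζ i S| + h i) → |f u| ≤ A) :
    |f ξ - f ζ| ≤ ∑ i, 4 * A / h i * (Fintype.card (IdxSet n (d i)) * nL (ξ i - ζ i)) := by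
  have hA0 : 0 ≤ A := (abs_nonneg _).trans <| hA ξ fun i S =>
    (le_max_left _ _).trans (le_add_of_nonneg_right (hh i).le)
  have := abs_sub_le_of_convexOn_update (g := fun z => f (Sigma.curry z))
    (x := Sigma.uncurry ξ) (y := Sigma.uncurry ζ) (h := fun c => h c.1)
    (fun z c => by simpa only [Sigma.curry_update] using hf (Sigma.curry z) c.1 c.2)
    (fun c => hh c.1) (fun u hu => hA _ fun i S => hu ⟨i, S⟩)
  simp only [Sigma.curry_uncurry, Fintype.sum_sigma, Sigma.uncurry, ← Finset.mul_sum] at this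
  refine this.trans (Finset.sum_le_sum fun i _ => ?_)
  exact mul_le_mul_of_nonneg_left (sum_abs_le_card_mul_nL (ξ i - ζ i))
    (div_nonneg (by positivity) (hh i).le)

section Cylinder

variable {n m : ℕ} {d : Fin m → ℕ} (r : ℕ) (p : Fin m → ℝ≥0∞)

def lpWeight (ξ ζ : (i : Fin m) → Lam n (d i)) : ℝ :=
  1 + ∑ j, if j.1 < r then nL (ξ j) ^ (p j).toReal + nL (ζ j) ^ (p j).toReal else 0

def boxRadius (ξ ζ : (i : Fin m) → Lam n (d i)) (i : Fin m) : ℝ :=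
  if i.1 < r then lpWeight r p ξ ζ ^ (p i).toReal⁻¹ else 1

variable {r p} (ξ ζ : (i : Fin m) → Lam n (d i))

theorem lpWeight_summand_nonneg (j : Fin m) :
    0 ≤ if j.1 < r then nL (ξ j) ^ (p j).toReal + nL (ζ j) ^ (p j).toReal else 0 := by
  split_ifs
  exacts [add_nonneg (Real.rpow_nonneg (nL_nonneg _) _) (Real.rpow_nonneg (nL_nonneg _) _), le_rfl]

theorem one_le_lpWeight : 1 ≤ lpWeight r p ξ ζ :=
  le_add_of_nonneg_right <| Finset.sum_nonneg fun j _ => lpWeight_summand_nonneg ξ ζ j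

theorem rpow_add_rpow_le_lpWeight {i : Fin m} (hi : i.1 < r) :
    nL (ξ i) ^ (p i).toReal + nL (ζ i) ^ (p i).toReal ≤ lpWeight r p ξ ζ := by
  have := Finset.single_le_sum (fun j _ => lpWeight_summand_nonneg (r := r) (p := p) ξ ζ j)
    (Finset.mem_univ i)
  rw [if_pos hi] at this
  exact this.trans (le_add_of_nonneg_left zero_le_one)

theorem boxRadius_pos (i : Fin m) : 0 < boxRadius r p ξ ζ i := by
  unfold boxRadius
  split_ifs
  exacts [Real.rpow_pos_of_pos (by linarith [one_le_lpWeight ξ ζ (r := r) (p := p)]) _, one_pos]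

theorem lpWeight_div_boxRadius_le {i : Fin m} (hi : i.1 < r) (hp : 1 ≤ (p i).toReal) :
    lpWeight r p ξ ζ / boxRadius r p ξ ζ i ≤
      1 + ∑ j, if j.1 < r then
        nL (ξ j) ^ ((p j).toReal * ((p i).toReal - 1) / (p i).toReal) +
          nL (ζ j) ^ ((p j).toReal * ((p i).toReal - 1) / (p i).toReal) else 0 := by
  rw [boxRadius, if_pos hi]
  exact div_rpow_inv_le_one_add_sum_ite _ (fun j => nL_nonneg (ξ j)) (fun j => nL_nonneg (ζ j)) hp

theorem exists_abs_le_mul_lpWeight {f : ((i : Fin m) → Lam n (d i)) → ℝ} {a : ℝ} (ha : 0 ≤ a)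
    {η : Fin m → ℝ → ℝ} (hp : ∀ i : Fin m, i.1 < r → 1 ≤ (p i).toReal)
    (hη0 : ∀ i t, 0 ≤ η i t) (hη : ∀ i, Monotone (η i))
    (hgrowth : ∀ ξ, |f ξ| ≤ a * (1 + ∑ i, if i.1 < r then nL (ξ i) ^ (p i).toReal
      else η i (nL (ξ i)))) (C : ℝ) :
    ∃ K, 1 ≤ K ∧ ∀ ξ ζ : (i : Fin m) → Lam n (d i),
      (∀ i : Fin m, r ≤ i.1 → ∀ S, |ξ i S| ≤ C) → (∀ i : Fin m, r ≤ i.1 → ∀ S, |ζ i S| ≤ C) →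
      ∀ u : (i : Fin m) → Lam n (d i),
        (∀ i S, |u i S| ≤ max |ξ i S| |ζ i S| + boxRadius r p ξ ζ i) →
          |f u| ≤ a * K * lpWeight r p ξ ζ := by
  set c : Fin m → ℝ := fun i => if i.1 < r then (2 * Fintype.card (IdxSet n (d i))) ^ (p i).toReal
    else η i (Fintype.card (IdxSet n (d i)) * (C + 1))
  refine ⟨1 + ∑ i, c i, le_add_of_nonneg_right <| Finset.sum_nonneg fun i _ => ?_,
    fun ξ ζ hξ hζ u hu => ?_⟩
  · simp only [c]
    split_ifs
    exacts [by positivity, hη0 i _]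
  have hH := one_le_lpWeight ξ ζ (r := r) (p := p)
  have hblock : ∀ i, (if i.1 < r then nL (u i) ^ (p i).toReal else η i (nL (u i))) ≤
      c i * lpWeight r p ξ ζ := by
    intro i
    have hui := hu i
    by_cases hi : i.1 < r
    · simp only [boxRadius, hi, if_true] at hui
      simpa only [hi, if_true, c] using nL_rpow_le_of_abs_le_max_add
        (by linarith [hp i hi]) (rpow_add_rpow_le_lpWeight ξ ζ hi) hui
    · simp only [boxRadius, hi, if_false] at hui
      simp only [hi, if_false, c]
      exact ((hη i) (nL_le_card_mul_of_abs_le_max_add (hξ i (not_lt.1 hi))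
        (hζ i (not_lt.1 hi)) hui)).trans (le_mul_of_one_le_right (hη0 i _) hH)
  calc |f u| ≤ a * (1 + ∑ i, c i * lpWeight r p ξ ζ) :=
        (hgrowth u).trans (by gcongr with i; exact hblock i)
    _ ≤ a * (1 + ∑ i, c i) * lpWeight r p ξ ζ := by
      rw [← Finset.sum_mul, mul_assoc]
      gcongr
      nlinarith

end Cylinder

theorem stmt7_general {n m : ℕ} (k : Fin m → ℕ)
    (r : ℕ) (p : Fin m → ℝ≥0∞)
    (hpfin : ∀ i : Fin m, i.1 < r → 1 ≤ p i ∧ p i ≠ ∞)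
    (f : ((i : Fin m) → Lam n (k i + 1)) → ℝ) (hsep : SepConvex f)
    (a : ℝ) (ha : 0 < a) (η : Fin m → ℝ → ℝ)
    (hη : ∀ i, (∀ t, 0 ≤ η i t) ∧ Continuous (η i) ∧ Monotone (η i))
    (hgrowth : ∀ ξ, |f ξ| ≤ a * (1 + ∑ i, if i.1 < r then nL (ξ i) ^ (p i).toReal
        else η i (nL (ξ i))))
    (C : ℝ) :
    ∃ β : Fin m → ℝ, (∀ i, 0 < β i) ∧
      ∀ ξ ζ : (i : Fin m) → Lam n (k i + 1),
        (∀ i : Fin m, r ≤ i.1 → ∀ S, |ξ i S| ≤ C) →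
        (∀ i : Fin m, r ≤ i.1 → ∀ S, |ζ i S| ≤ C) →
        |f ξ - f ζ| ≤
          (∑ i, if i.1 < r then
            β i * (1 + ∑ j, if j.1 < r then
                nL (ξ j) ^ ((p j).toReal * ((p i).toReal - 1) / (p i).toReal) +
                  nL (ζ j) ^ ((p j).toReal * ((p i).toReal - 1) / (p i).toReal)
              else 0) * nL (ξ i - ζ i)
          else 0) +
          ∑ i, if r ≤ i.1 then
            β i * (1 + ∑ j, if j.1 < r then
                nL (ξ j) ^ (p j).toReal + nL (ζ j) ^ (p j).toReal else 0) * nL (ξ i - ζ i)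
          else 0 := by
  have hp : ∀ i : Fin m, i.1 < r → 1 ≤ (p i).toReal := fun i hi =>
    ENNReal.toReal_mono (hpfin i hi).2 (hpfin i hi).1
  obtain ⟨K, hK, hbox⟩ := exists_abs_le_mul_lpWeight ha.le hp (fun i => (hη i).1)
    (fun i => (hη i).2.2) hgrowth C
  refine ⟨fun i => 4 * a * K * (Fintype.card (IdxSet n (k i + 1)) + 1),
    fun i => mul_pos (mul_pos (by positivity) (by linarith)) (by positivity),
    fun ξ ζ hξ hζ => (hsep.abs_sub_le ξ ζ (boxRadius_pos ξ ζ) (hbox ξ ζ hξ hζ)).trans ?_⟩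
  rw [← Finset.sum_add_distrib]
  refine Finset.sum_le_sum fun i _ => ?_
  have hcomponent : ∀ F, lpWeight r p ξ ζ / boxRadius r p ξ ζ i ≤ F →
      4 * (a * K * lpWeight r p ξ ζ) / boxRadius r p ξ ζ i *
        (Fintype.card (IdxSet n (k i + 1)) * nL (ξ i - ζ i)) ≤
      4 * a * K * (Fintype.card (IdxSet n (k i + 1)) + 1) * F * nL (ξ i - ζ i) := fun F hF => by
    calc _ = 4 * a * K * (lpWeight r p ξ ζ / boxRadius r p ξ ζ i) *
          Fintype.card (IdxSet n (k i + 1)) * nL (ξ i - ζ i) := by ring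
      _ ≤ 4 * a * K * F * (Fintype.card (IdxSet n (k i + 1)) + 1) * nL (ξ i - ζ i) := by
        have hF0 : 0 ≤ F := (div_pos (by linarith [one_le_lpWeight ξ ζ (r := r) (p := p)])
          (boxRadius_pos ξ ζ i)).le.trans hF
        gcongr
        · exact nL_nonneg _
        · linarith
      _ = _ := by ring
  rcases lt_or_ge i.1 r with hi | hi
  · simp only [hi, if_true, not_le.2 hi, if_false, add_zero]
    exact hcomponent _ (lpWeight_div_boxRadius_le ξ ζ hi (hp i hi))
  · simp only [not_lt.2 hi, if_false, hi, if_true, zero_add]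
    exact hcomponent _ (by rw [boxRadius, if_neg (not_lt.2 hi), div_one]; exact le_rfl)

/-- Lipschitz-type estimate for separately convex functions when the last
`m - r` exponents are `∞`, on the set `K = Λ^{k_1} × ⋯ × Λ^{k_r} × Q`, `Q = [-C,C]`-cube. -/
theorem stmt7 {n m : ℕ} (hm : 1 ≤ m) (k : Fin m → ℕ) (hk : ∀ i, k i + 1 ≤ n)
    (r : ℕ) (hr : r ≤ m) (p : Fin m → ℝ≥0∞)
    (hpfin : ∀ i : Fin m, i.1 < r → 1 ≤ p i ∧ p i ≠ ∞)
    (hpinf : ∀ i : Fin m, r ≤ i.1 → p i = ∞)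
    (f : ((i : Fin m) → Lam n (k i + 1)) → ℝ) (hsep : SepConvex f)
    (a : ℝ) (ha : 0 < a) (η : Fin m → ℝ → ℝ)
    (hη : ∀ i, (∀ t, 0 ≤ η i t) ∧ Continuous (η i) ∧ Monotone (η i))
    (hgrowth : ∀ ξ, |f ξ| ≤ a * (1 + ∑ i, if i.1 < r then nL (ξ i) ^ (p i).toReal
        else η i (nL (ξ i))))
    (C : ℝ) (hC : 0 < C) :
    ∃ β : Fin m → ℝ, (∀ i, 0 < β i) ∧
      ∀ ξ ζ : (i : Fin m) → Lam n (k i + 1),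
        (∀ i : Fin m, r ≤ i.1 → ∀ S, |ξ i S| ≤ C) →
        (∀ i : Fin m, r ≤ i.1 → ∀ S, |ζ i S| ≤ C) →
        |f ξ - f ζ| ≤
          (∑ i, if i.1 < r then
            β i * (1 + ∑ j, if j.1 < r then
                nL (ξ j) ^ ((p j).toReal * ((p i).toReal - 1) / (p i).toReal) +
                  nL (ζ j) ^ ((p j).toReal * ((p i).toReal - 1) / (p i).toReal)
              else 0) * nL (ξ i - ζ i)
          else 0) +
          ∑ i, if r ≤ i.1 then
            β i * (1 + ∑ j, if j.1 < r then
                nL (ξ j) ^ (p j).toReal + nL (ζ j) ^ (p j).toReal else 0) * nL (ξ i - ζ i)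
          else 0 :=
  stmt7_general k r p hpfin f hsep a ha η hη hgrowth C
end
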